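/- arXiv:1105.1642 — 2 statements merged into one kernel-verified Lean document; each statement's English description precedes it below -/
import Mathlib

section
/- Let A be a bounded algebra over 𝕂, M a bounded right A-module, N a bounded left A-module, and E a locally convex space. (i) For every bounded 𝕂-linear mapping g : M ⊗_A^β N → E, the mapping f := g ∘ ⊗_A^β is bounded, 𝕂-bilinear and A-balanced. (ii) Conversely, for every bounded A-balanced 𝕂-bilinear mapping f : M × N → E there exists a unique bounded 𝕂-linear mapping g : M ⊗_A^β N → E with f = g ∘ ⊗_A^β. These correspondences give bornological isomorphisms L^b(M ⊗_A^β N, E) ≅ L^{A,b}(M, N; E) ≅ L^b_A(M, L^b(N, E)) ≅ L^b_A(N, L^b(M, E)), where all spaces carry the topology of uniform convergence on bounded sets. -/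
/-!
The heart of the matter is an equicontinuity principle for `M ⊗_β N`. Let `hᵢ : M ⊗ N → E` be
linear maps that are equibounded on `{m ⊗ n | (m, n) ∈ B}` for every bounded `B ⊆ M × N`.
Pulling back the topology of uniform convergence on the index set along `x ↦ (hᵢ x)ᵢ` gives a
locally convex topology on `M ⊗ N` in which `⊗` is bounded, so it is coarser than the
bornological tensor topology `τT`: the family is `τT`-equicontinuous at `0`.

For a single map this makes the linearisation of a bounded balanced bilinear map continuous, so
it vanishes on the closure `J` of `J₀` and descends to `M ⊗_A^β N`; for families it shows that
equibounded sets correspond. The remaining isomorphisms are currying, since a subset of `M × N`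
is bounded iff both of its projections are.
-/

open MulOpposite Set
open scoped TensorProduct Pointwise

/-- Convexity expressed through the real scalars of `𝕜` (`𝕜` = ℝ or ℂ). -/
def RCConvex (𝕜 : Type*) [RCLike 𝕜] {E : Type*} [AddCommGroup E] [Module 𝕜 E]
    (s : Set E) : Prop :=
  ∀ ⦃x⦄, x ∈ s → ∀ ⦃y⦄, y ∈ s → ∀ t : ℝ, 0 ≤ t → t ≤ 1 →
    ((t : 𝕜) • x + (((1 - t : ℝ) : 𝕜)) • y) ∈ s

/-- `τ` is a linear topology: addition and scalar multiplication continuous. -/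
def IsLinearTop (𝕜 : Type*) [RCLike 𝕜] (E : Type*) [AddCommGroup E] [Module 𝕜 E]
    (τ : TopologicalSpace E) : Prop :=
  @IsTopologicalAddGroup E τ _ ∧ @ContinuousSMul 𝕜 E _ _ τ

/-- `τ` is a locally convex topology. -/
def IsLCTop (𝕜 : Type*) [RCLike 𝕜] (E : Type*) [AddCommGroup E] [Module 𝕜 E]
    (τ : TopologicalSpace E) : Prop :=
  IsLinearTop 𝕜 E τ ∧ ∀ U ∈ @nhds E τ 0, ∃ V ∈ @nhds E τ 0, V ⊆ U ∧ RCConvex 𝕜 V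

/-- von Neumann boundedness for an explicitly given topology. -/
def VNBdd (𝕜 : Type*) [RCLike 𝕜] {E : Type*} [AddCommGroup E] [Module 𝕜 E]
    (τ : TopologicalSpace E) (s : Set E) : Prop :=
  ∀ V ∈ @nhds E τ 0, Absorbs 𝕜 V s

/-- `f` maps von Neumann bounded sets to von Neumann bounded sets. -/
def BddMap (𝕜 : Type*) [RCLike 𝕜] {E F : Type*} [AddCommGroup E] [Module 𝕜 E]
    [AddCommGroup F] [Module 𝕜 F]
    (τE : TopologicalSpace E) (τF : TopologicalSpace F) (f : E → F) : Prop :=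
  ∀ s : Set E, VNBdd 𝕜 τE s → VNBdd 𝕜 τF (f '' s)

/-- A family `S` of maps is (equi-)bounded: this is exactly von Neumann boundedness
of `S` in the topology of uniform convergence on bounded sets. -/
def FamBdd (𝕜 : Type*) [RCLike 𝕜] {E F : Type*} [AddCommGroup E] [Module 𝕜 E]
    [AddCommGroup F] [Module 𝕜 F]
    (τE : TopologicalSpace E) (τF : TopologicalSpace F) (S : Set (E → F)) : Prop :=
  ∀ s : Set E, VNBdd 𝕜 τE s → VNBdd 𝕜 τF (⋃ f ∈ S, f '' s)

/-- `𝕜`-bilinearity of a map on a product. -/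
def IsBilinMap (𝕜 : Type*) [RCLike 𝕜] {M N E : Type*} [AddCommGroup M] [Module 𝕜 M]
    [AddCommGroup N] [Module 𝕜 N] [AddCommGroup E] [Module 𝕜 E]
    (f : M × N → E) : Prop :=
  (∀ m m' n, f (m + m', n) = f (m, n) + f (m', n)) ∧
  (∀ (c : 𝕜) m n, f (c • m, n) = c • f (m, n)) ∧
  (∀ m n n', f (m, n + n') = f (m, n) + f (m, n')) ∧
  (∀ (c : 𝕜) m n, f (m, c • n) = c • f (m, n))

/-- `f` is `A`-balanced: `f (m·a, n) = f (m, a·n)`; the right `A`-module structure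
on `M` is given by a `Aᵐᵒᵖ`-module structure. -/
def IsBalancedMap (A : Type*) [Ring A] {M N E : Type*} [AddCommGroup M]
    [Module Aᵐᵒᵖ M] [AddCommGroup N] [Module A N] (f : M × N → E) : Prop :=
  ∀ (a : A) (m : M) (n : N), f (op a • m, n) = f (m, a • n)

/-- `τ` is the projective tensor product topology on `M ⊗[𝕜] N`: the finest locally
convex topology making the canonical bilinear map continuous. -/
def IsProjTensorTop (𝕜 : Type*) [RCLike 𝕜] {M N : Type*} [AddCommGroup M] [Module 𝕜 M]
    [AddCommGroup N] [Module 𝕜 N] (τM : TopologicalSpace M) (τN : TopologicalSpace N)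
    (τ : TopologicalSpace (TensorProduct 𝕜 M N)) : Prop :=
  IsLCTop 𝕜 (TensorProduct 𝕜 M N) τ ∧
  @Continuous (M × N) (TensorProduct 𝕜 M N) (@instTopologicalSpaceProd M N τM τN) τ
    (fun p => p.1 ⊗ₜ[𝕜] p.2) ∧
  ∀ τ' : TopologicalSpace (TensorProduct 𝕜 M N), IsLCTop 𝕜 (TensorProduct 𝕜 M N) τ' →
    @Continuous (M × N) (TensorProduct 𝕜 M N) (@instTopologicalSpaceProd M N τM τN) τ'
      (fun p => p.1 ⊗ₜ[𝕜] p.2) → τ ≤ τ'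

/-- `τ` is the bornological tensor product topology on `M ⊗[𝕜] N`: the finest locally
convex topology making the canonical bilinear map bounded. -/
def IsBetaTensorTop (𝕜 : Type*) [RCLike 𝕜] {M N : Type*} [AddCommGroup M] [Module 𝕜 M]
    [AddCommGroup N] [Module 𝕜 N] (τM : TopologicalSpace M) (τN : TopologicalSpace N)
    (τ : TopologicalSpace (TensorProduct 𝕜 M N)) : Prop :=
  IsLCTop 𝕜 (TensorProduct 𝕜 M N) τ ∧
  BddMap 𝕜 (@instTopologicalSpaceProd M N τM τN) τ (fun p : M × N => p.1 ⊗ₜ[𝕜] p.2) ∧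
  ∀ τ' : TopologicalSpace (TensorProduct 𝕜 M N), IsLCTop 𝕜 (TensorProduct 𝕜 M N) τ' →
    BddMap 𝕜 (@instTopologicalSpaceProd M N τM τN) τ' (fun p : M × N => p.1 ⊗ₜ[𝕜] p.2) →
      τ ≤ τ'

/-- The subspace `J₀` of `M ⊗[𝕜] N` spanned by the elements `m·a ⊗ n - m ⊗ a·n`. -/
def balancedRel (𝕜 A : Type*) [RCLike 𝕜] [Ring A] [Algebra 𝕜 A] (M N : Type*)
    [AddCommGroup M] [Module 𝕜 M] [Module Aᵐᵒᵖ M]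
    [AddCommGroup N] [Module 𝕜 N] [Module A N] :
    Submodule 𝕜 (TensorProduct 𝕜 M N) :=
  Submodule.span 𝕜
    {x | ∃ (a : A) (m : M) (n : N), x = (op a • m) ⊗ₜ[𝕜] n - m ⊗ₜ[𝕜] (a • n)}

/-- The subspace `J₀` for modules over a commutative algebra `A`. -/
def balancedRelComm (𝕜 A : Type*) [RCLike 𝕜] [CommRing A] [Algebra 𝕜 A] (M N : Type*)
    [AddCommGroup M] [Module 𝕜 M] [Module A M]
    [AddCommGroup N] [Module 𝕜 N] [Module A N] :
    Submodule 𝕜 (TensorProduct 𝕜 M N) :=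
  Submodule.span 𝕜
    {x | ∃ (a : A) (m : M) (n : N), x = (a • m) ⊗ₜ[𝕜] n - m ⊗ₜ[𝕜] (a • n)}

/-- Boundedness of a family in `L^b_A(M, L^b(N, E))`: a set of curried maps is
bounded iff it maps each bounded set of `M` to an equibounded family `N → E`. -/
def CurFamBdd (𝕜 : Type*) [RCLike 𝕜] {M N E : Type*} [AddCommGroup M] [Module 𝕜 M]
    [AddCommGroup N] [Module 𝕜 N] [AddCommGroup E] [Module 𝕜 E]
    (τM : TopologicalSpace M) (τN : TopologicalSpace N) (τE : TopologicalSpace E)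
    (S : Set (M → N → E)) : Prop :=
  ∀ B : Set M, VNBdd 𝕜 τM B → FamBdd 𝕜 τN τE (⋃ h ∈ S, h '' B)

/-- `h : M → L^b(N, E)` is a bounded right-`A`-linear map into the space of bounded
linear maps `N → E` (with its right `A`-module structure `(T·a)(n) = T(a·n)`). -/
def IsCurriedBddHom (𝕜 : Type*) [RCLike 𝕜] (A : Type*) [Ring A] {M N E : Type*}
    [AddCommGroup M] [Module 𝕜 M] [Module Aᵐᵒᵖ M]
    [AddCommGroup N] [Module 𝕜 N] [Module A N] [AddCommGroup E] [Module 𝕜 E]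
    (τM : TopologicalSpace M) (τN : TopologicalSpace N) (τE : TopologicalSpace E)
    (h : M → N → E) : Prop :=
  (∀ m m', h (m + m') = h m + h m') ∧
  (∀ (c : 𝕜) m, h (c • m) = c • h m) ∧
  (∀ (a : A) m, h (op a • m) = fun n => h m (a • n)) ∧
  (∀ m n n', h m (n + n') = h m n + h m n') ∧
  (∀ m (c : 𝕜) n, h m (c • n) = c • h m n) ∧
  (∀ m, BddMap 𝕜 τN τE (h m)) ∧
  (∀ B : Set M, VNBdd 𝕜 τM B → FamBdd 𝕜 τN τE (h '' B))

/-- `k : N → L^b(M, E)` is a bounded left-`A`-linear map into the space of bounded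
linear maps `M → E` (with `(a·T)(m) = T(m·a)`). -/
def IsCurriedBddHom' (𝕜 : Type*) [RCLike 𝕜] (A : Type*) [Ring A] {M N E : Type*}
    [AddCommGroup M] [Module 𝕜 M] [Module Aᵐᵒᵖ M]
    [AddCommGroup N] [Module 𝕜 N] [Module A N] [AddCommGroup E] [Module 𝕜 E]
    (τM : TopologicalSpace M) (τN : TopologicalSpace N) (τE : TopologicalSpace E)
    (k : N → M → E) : Prop :=
  (∀ n n', k (n + n') = k n + k n') ∧
  (∀ (c : 𝕜) n, k (c • n) = c • k n) ∧
  (∀ (a : A) n, k (a • n) = fun m => k n (op a • m)) ∧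
  (∀ n m m', k n (m + m') = k n m + k n m') ∧
  (∀ n (c : 𝕜) m, k n (c • m) = c • k n m) ∧
  (∀ n, BddMap 𝕜 τM τE (k n)) ∧
  (∀ B : Set N, VNBdd 𝕜 τN B → FamBdd 𝕜 τM τE (k '' B))

open Bornology Filter Topology
open scoped UniformConvergence

theorem Submodule.le_of_coe_eq_closure {R X : Type*} [Semiring R] [AddCommMonoid X] [Module R X]
    [TopologicalSpace X] {J P : Submodule R X} (hJ : (J : Set X) = closure P) : P ≤ J :=
  fun x hx => by
    rw [← SetLike.mem_coe, hJ]
    exact subset_closure hx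

section BoundedMaps

variable {𝕜 E F G : Type*} [RCLike 𝕜] [AddCommGroup E] [Module 𝕜 E] [AddCommGroup F]
  [Module 𝕜 F] [AddCommGroup G] [Module 𝕜 G]
  {τE : TopologicalSpace E} {τF : TopologicalSpace F} {τG : TopologicalSpace G}

theorem BddMap.comp {g : F → G} {f : E → F} (hg : BddMap 𝕜 τF τG g) (hf : BddMap 𝕜 τE τF f) :
    BddMap 𝕜 τE τG (g ∘ f) :=
  fun s hs => by simpa only [image_comp] using hg _ (hf s hs)

theorem FamBdd.comp_bddMap {S : Set (F → G)} {f : E → F} (hS : FamBdd 𝕜 τF τG S)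
    (hf : BddMap 𝕜 τE τF f) : FamBdd 𝕜 τE τG ((· ∘ f) '' S) :=
  fun s hs => by simpa only [biUnion_image, image_comp] using hS _ (hf s hs)

theorem bddMap_iff_famBdd_singleton {f : E → F} : BddMap 𝕜 τE τF f ↔ FamBdd 𝕜 τE τF {f} := by
  simp only [FamBdd, BddMap, biUnion_singleton]

theorem ContinuousLinearMap.bddMap (f : E →L[𝕜] F) : BddMap 𝕜 τE τF f :=
  fun _ hs => IsVonNBounded.image hs f

end BoundedMaps

section Currying

variable {𝕜 M N E : Type*} [RCLike 𝕜] [AddCommGroup M] [Module 𝕜 M] [TopologicalSpace M]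
  [AddCommGroup N] [Module 𝕜 N] [TopologicalSpace N]
  [AddCommGroup E] [Module 𝕜 E] [TopologicalSpace E]

theorem Bornology.IsVonNBounded.prod [ContinuousAdd M] [ContinuousAdd N] {B : Set M} {C : Set N}
    (hB : IsVonNBounded 𝕜 B) (hC : IsVonNBounded 𝕜 C) : IsVonNBounded 𝕜 (B ×ˢ C) := by
  refine ((hB.image (.inl 𝕜 M N)).add (hC.image (.inr 𝕜 M N))).subset ?_
  rintro ⟨m, n⟩ ⟨hm, hn⟩
  exact ⟨(m, 0), mem_image_of_mem _ hm, (0, n), mem_image_of_mem _ hn, by simp⟩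

variable [ContinuousAdd M] [ContinuousAdd N]

theorem famBdd_iff_curFamBdd_curry (S : Set (M × N → E)) :
    FamBdd 𝕜 inferInstance inferInstance S ↔
      CurFamBdd 𝕜 inferInstance inferInstance inferInstance (Function.curry '' S) := by
  constructor
  · intro hS B hB C hC
    refine IsVonNBounded.subset ?_ (hS _ (IsVonNBounded.prod hB hC))
    simp only [subset_def, mem_iUnion, mem_image, exists_prop]
    rintro _ ⟨_, ⟨_, ⟨f, hf, rfl⟩, m, hm, rfl⟩, n, hn, rfl⟩
    exact ⟨f, hf, (m, n), ⟨hm, hn⟩, rfl⟩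
  · intro hS s hs
    refine IsVonNBounded.subset ?_
      (hS _ (IsVonNBounded.image hs (.fst 𝕜 M N)) _ (IsVonNBounded.image hs (.snd 𝕜 M N)))
    simp only [subset_def, mem_iUnion, mem_image, exists_prop]
    rintro _ ⟨f, hf, p, hp, rfl⟩
    exact ⟨_, ⟨_, ⟨f, hf, rfl⟩, p.1, ⟨p, hp, rfl⟩, rfl⟩, p.2, ⟨p, hp, rfl⟩, rfl⟩

theorem famBdd_iff_curFamBdd_flip (S : Set (M × N → E)) :
    FamBdd 𝕜 inferInstance inferInstance S ↔
      CurFamBdd 𝕜 inferInstance inferInstance inferInstance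
        ((fun f n m => f (m, n)) '' S) := by
  constructor
  · intro hS B hB C hC
    refine IsVonNBounded.subset ?_ (hS _ (IsVonNBounded.prod hC hB))
    simp only [subset_def, mem_iUnion, mem_image, exists_prop]
    rintro _ ⟨_, ⟨_, ⟨f, hf, rfl⟩, n, hn, rfl⟩, m, hm, rfl⟩
    exact ⟨f, hf, (m, n), ⟨hm, hn⟩, rfl⟩
  · intro hS s hs
    refine IsVonNBounded.subset ?_
      (hS _ (IsVonNBounded.image hs (.snd 𝕜 M N)) _ (IsVonNBounded.image hs (.fst 𝕜 M N)))
    simp only [subset_def, mem_iUnion, mem_image, exists_prop]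
    rintro _ ⟨f, hf, p, hp, rfl⟩
    exact ⟨_, ⟨_, ⟨f, hf, rfl⟩, p.2, ⟨p, hp, rfl⟩, rfl⟩, p.1, ⟨p, hp, rfl⟩, rfl⟩

end Currying

section Absorbs

variable {𝕜 ι T E : Type*} [NormedField 𝕜] [AddCommGroup T] [Module 𝕜 T]
  [AddCommGroup E] [Module 𝕜 E]

theorem absorbs_setOf_forall_mem_iff (h : ι → T →ₗ[𝕜] E) (W : Set E) (t : Set T) :
    Absorbs 𝕜 {x | ∀ i, h i x ∈ W} t ↔ Absorbs 𝕜 W (⋃ i, h i '' t) := by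
  constructor
  · intro ht
    filter_upwards [ht] with a ha
    simp only [iUnion_subset_iff, image_subset_iff]
    intro i x hx
    obtain ⟨y, hy, rfl⟩ := ha hx
    exact ⟨h i y, hy i, (map_smul (h i) a y).symm⟩
  · intro hW
    filter_upwards [hW, eventually_ne_cobounded 0] with a ha ha0 x hx
    refine ⟨a⁻¹ • x, fun i => ?_, smul_inv_smul₀ ha0 x⟩
    obtain ⟨w, hw, hwx⟩ := ha (mem_iUnion.2 ⟨i, mem_image_of_mem _ hx⟩)
    rwa [map_smul, ← hwx, inv_smul_smul₀ ha0]

end Absorbs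

section EquicontinuousFamily

variable {𝕜 ι X E : Type*} [RCLike 𝕜] [AddCommGroup X] [Module 𝕜 X] [TopologicalSpace X]
  [AddCommGroup E] [Module 𝕜 E] [TopologicalSpace E]

theorem famBdd_range_of_setOf_forall_mem_nhds (g : ι → X →ₗ[𝕜] E)
    (hg : ∀ W ∈ 𝓝 (0 : E), {x | ∀ i, g i x ∈ W} ∈ 𝓝 (0 : X)) :
    FamBdd 𝕜 inferInstance inferInstance (range fun i => ⇑(g i)) := by
  intro s hs W hW
  rw [biUnion_range]
  exact (absorbs_setOf_forall_mem_iff g W s).1 (hs _ (hg W hW))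

end EquicontinuousFamily

section UniformTopOfFamily

variable {𝕜 ι T E : Type*} [RCLike 𝕜] [AddCommGroup T] [Module 𝕜 T]
  [AddCommGroup E] [Module 𝕜 E] [TopologicalSpace E] [IsTopologicalAddGroup E]

abbrev uniformTopOfFamily (h : ι → T →ₗ[𝕜] E) : TopologicalSpace T :=
  letI := IsTopologicalAddGroup.rightUniformSpace E
  TopologicalSpace.induced (UniformFun.ofFun ∘ LinearMap.pi h) inferInstance

theorem uniformTopOfFamily_nhds_zero_hasBasis (h : ι → T →ₗ[𝕜] E) :
    (@nhds T (uniformTopOfFamily h) 0).HasBasis (· ∈ 𝓝 (0 : E))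
      fun V => {x | ∀ i, h i x ∈ V} := by
  let := IsTopologicalAddGroup.rightUniformSpace E
  have := isUniformAddGroup_of_addCommGroup (G := E)
  rw [uniformTopOfFamily, nhds_induced, Function.comp_apply, map_zero]
  exact UniformFun.hasBasis_nhds_zero.comap _

theorem isLCTop_uniformTopOfFamily (hE : IsLCTop 𝕜 E inferInstance) (h : ι → T →ₗ[𝕜] E)
    (horb : ∀ x, IsVonNBounded 𝕜 (range fun i => h i x)) :
    IsLCTop 𝕜 T (uniformTopOfFamily h) := by
  let := IsTopologicalAddGroup.rightUniformSpace E
  have := isUniformAddGroup_of_addCommGroup (G := E)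
  have := hE.1.2
  let := uniformTopOfFamily h
  have hind : IsInducing (UniformFun.ofFun ∘ LinearMap.pi h) := ⟨rfl⟩
  have hgrp : IsTopologicalAddGroup T :=
    hind.topologicalAddGroup ((AddMonoidHom.id (ι →ᵤ E)).comp (LinearMap.pi h).toAddMonoidHom)
  refine ⟨⟨hgrp, UniformFun.continuousSMul_induced_of_range_bounded 𝕜 ι E T
    (LinearMap.pi h) hind horb⟩, fun U hU => ?_⟩
  obtain ⟨V, hV, hVU⟩ := (uniformTopOfFamily_nhds_zero_hasBasis h).mem_iff.1 hU
  obtain ⟨W, hW, hWV, hWc⟩ := hE.2 V hV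
  refine ⟨_, (uniformTopOfFamily_nhds_zero_hasBasis h).mem_of_mem hW,
    fun x hx => hVU fun i => hWV (hx i), fun x hx y hy t ht0 ht1 i => ?_⟩
  simpa only [map_add, map_smul] using hWc (hx i) (hy i) t ht0 ht1

theorem isVonNBounded_uniformTopOfFamily {h : ι → T →ₗ[𝕜] E} {s : Set T}
    (hs : IsVonNBounded 𝕜 (⋃ i, h i '' s)) :
    @IsVonNBounded 𝕜 T _ _ _ (uniformTopOfFamily h) s := by
  let := uniformTopOfFamily h
  rw [(uniformTopOfFamily_nhds_zero_hasBasis h).isVonNBounded_iff]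
  exact fun V hV => (absorbs_setOf_forall_mem_iff h V s).2 (hs hV)

end UniformTopOfFamily

section BetaTensor

variable {𝕜 ι M N E : Type*} [RCLike 𝕜]
  [AddCommGroup M] [Module 𝕜 M] [TopologicalSpace M]
  [AddCommGroup N] [Module 𝕜 N] [TopologicalSpace N]
  [AddCommGroup E] [Module 𝕜 E] [TopologicalSpace E]

theorem isVonNBounded_range_apply_of_famBdd [ContinuousSMul 𝕜 M] [ContinuousSMul 𝕜 N]
    [ContinuousAdd E] [ContinuousSMul 𝕜 E] (h : ι → M ⊗[𝕜] N →ₗ[𝕜] E)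
    (hb : FamBdd 𝕜 inferInstance inferInstance (range fun i (p : M × N) => h i (p.1 ⊗ₜ p.2)))
    (x : M ⊗[𝕜] N) : IsVonNBounded 𝕜 (range fun i => h i x) := by
  induction x using TensorProduct.induction_on with
  | zero => exact (isVonNBounded_singleton 0).subset (by rintro _ ⟨i, rfl⟩; simp)
  | tmul m n =>
    refine IsVonNBounded.subset ?_ (hb {(m, n)} (isVonNBounded_singleton _))
    rintro _ ⟨i, rfl⟩
    exact mem_biUnion (mem_range_self i) (mem_image_of_mem _ (mem_singleton _))
  | add x y hx hy =>
    refine (hx.add hy).subset ?_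
    rintro _ ⟨i, rfl⟩
    exact ⟨h i x, mem_range_self i, h i y, mem_range_self i, (map_add (h i) x y).symm⟩

theorem setOf_forall_mem_nhds_of_isBetaTensorTop [ContinuousSMul 𝕜 M] [ContinuousSMul 𝕜 N]
    (hE : IsLCTop 𝕜 E inferInstance) {τT : TopologicalSpace (M ⊗[𝕜] N)}
    (hτT : IsBetaTensorTop 𝕜 inferInstance inferInstance τT) (h : ι → M ⊗[𝕜] N →ₗ[𝕜] E)
    (hb : FamBdd 𝕜 inferInstance inferInstance (range fun i (p : M × N) => h i (p.1 ⊗ₜ p.2)))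
    {W : Set E} (hW : W ∈ 𝓝 0) : {x | ∀ i, h i x ∈ W} ∈ @nhds _ τT 0 := by
  have := hE.1.1
  have := hE.1.2
  have htmul : BddMap 𝕜 inferInstance (uniformTopOfFamily h) fun p : M × N => p.1 ⊗ₜ[𝕜] p.2 := by
    intro s hs
    have hbs := hb s hs
    simp only [biUnion_range, ← image_image] at hbs
    exact isVonNBounded_uniformTopOfFamily hbs
  have hle := hτT.2.2 _
    (isLCTop_uniformTopOfFamily hE h (isVonNBounded_range_apply_of_famBdd h hb)) htmul
  exact nhds_mono hle ((uniformTopOfFamily_nhds_zero_hasBasis h).mem_of_mem hW)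

theorem continuous_of_isBetaTensorTop [ContinuousSMul 𝕜 M] [ContinuousSMul 𝕜 N]
    (hE : IsLCTop 𝕜 E inferInstance) {τT : TopologicalSpace (M ⊗[𝕜] N)}
    (hτT : IsBetaTensorTop 𝕜 inferInstance inferInstance τT) (h : M ⊗[𝕜] N →ₗ[𝕜] E)
    (hb : BddMap 𝕜 inferInstance inferInstance fun p : M × N => h (p.1 ⊗ₜ p.2)) :
    @Continuous _ _ τT _ h := by
  let := τT
  have := hτT.1.1.1
  have := hE.1.1
  refine continuous_of_continuousAt_zero h fun W hW => ?_
  rw [map_zero] at hW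
  have hfam : FamBdd 𝕜 inferInstance inferInstance
      (range fun (_ : Unit) (p : M × N) => h (p.1 ⊗ₜ p.2)) := by
    simpa only [range_const, FamBdd, BddMap, biUnion_singleton] using hb
  exact mem_map.2 (mem_of_superset (setOf_forall_mem_nhds_of_isBetaTensorTop hE hτT _ hfam hW)
    fun x hx => hx ())

theorem setOf_forall_mem_nhds_quotient_of_isBetaTensorTop [ContinuousSMul 𝕜 M]
    [ContinuousSMul 𝕜 N] (hE : IsLCTop 𝕜 E inferInstance) {τT : TopologicalSpace (M ⊗[𝕜] N)}
    (hτT : IsBetaTensorTop 𝕜 inferInstance inferInstance τT) (J : Submodule 𝕜 (M ⊗[𝕜] N))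
    (g : ι → (M ⊗[𝕜] N) ⧸ J →ₗ[𝕜] E)
    (hb : FamBdd 𝕜 inferInstance inferInstance
      (range fun i (p : M × N) => g i (J.mkQ (p.1 ⊗ₜ p.2))))
    {W : Set E} (hW : W ∈ 𝓝 0) : {q | ∀ i, g i q ∈ W} ∈ @nhds _ (τT.coinduced J.mkQ) 0 := by
  let := τT
  have := hτT.1.1.1
  have hpre := setOf_forall_mem_nhds_of_isBetaTensorTop hE hτT (fun i => (g i).comp J.mkQ) hb hW
  have : J.mkQ '' (J.mkQ ⁻¹' {q | ∀ i, g i q ∈ W}) ∈ 𝓝 (J.mkQ 0) :=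
    J.isOpenMap_mkQ.image_mem_nhds hpre
  rwa [image_preimage_eq _ J.mkQ_surjective, map_zero] at this

end BetaTensor

section BalancedMaps

variable {𝕜 A M N E : Type*} [RCLike 𝕜] [Ring A]
  [AddCommGroup M] [Module 𝕜 M] [Module Aᵐᵒᵖ M] [TopologicalSpace M]
  [AddCommGroup N] [Module 𝕜 N] [Module A N] [TopologicalSpace N]
  [AddCommGroup E] [Module 𝕜 E] [TopologicalSpace E]

variable (𝕜 A) in
def IsBddBalancedBilinMap (f : M × N → E) : Prop :=
  BddMap 𝕜 inferInstance inferInstance f ∧ IsBilinMap 𝕜 f ∧ IsBalancedMap A f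

variable [ContinuousAdd M] [ContinuousAdd N]

theorem isCurriedBddHom_curry_iff [ContinuousSMul 𝕜 M] (f : M × N → E) :
    IsCurriedBddHom 𝕜 A inferInstance inferInstance inferInstance (Function.curry f) ↔
      IsBddBalancedBilinMap 𝕜 A f := by
  have hbdd : BddMap 𝕜 inferInstance inferInstance f ↔ CurFamBdd 𝕜 inferInstance inferInstance
      inferInstance (Function.curry '' {f}) :=
    bddMap_iff_famBdd_singleton.trans (famBdd_iff_curFamBdd_curry {f})
  simp only [CurFamBdd, image_singleton, biUnion_singleton] at hbdd
  rw [IsBddBalancedBilinMap, hbdd]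
  constructor
  · rintro ⟨hadd, hsmul, hbal, hadd', hsmul', -, hB⟩
    exact ⟨hB, ⟨fun m m' n => congrFun (hadd m m') n, fun c m n => congrFun (hsmul c m) n,
      hadd', fun c m n => hsmul' m c n⟩, fun a m n => congrFun (hbal a m) n⟩
  · rintro ⟨hB, ⟨hadd, hsmul, hadd', hsmul'⟩, hbal⟩
    refine ⟨fun m m' => funext (hadd m m'), fun c m => funext (hsmul c m),
      fun a m => funext (hbal a m), hadd', fun m c n => hsmul' c m n, fun m => ?_, hB⟩
    simpa only [image_singleton, bddMap_iff_famBdd_singleton] using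
      hB {m} (isVonNBounded_singleton m)

theorem isCurriedBddHom'_flip_iff [ContinuousSMul 𝕜 N] (f : M × N → E) :
    IsCurriedBddHom' 𝕜 A inferInstance inferInstance inferInstance (fun n m => f (m, n)) ↔
      IsBddBalancedBilinMap 𝕜 A f := by
  have hbdd : BddMap 𝕜 inferInstance inferInstance f ↔ CurFamBdd 𝕜 inferInstance inferInstance
      inferInstance ((fun f n m => f (m, n)) '' {f}) :=
    bddMap_iff_famBdd_singleton.trans (famBdd_iff_curFamBdd_flip {f})
  simp only [CurFamBdd, image_singleton, biUnion_singleton] at hbdd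
  rw [IsBddBalancedBilinMap, hbdd]
  constructor
  · rintro ⟨hadd, hsmul, hbal, hadd', hsmul', -, hB⟩
    exact ⟨hB, ⟨fun m m' n => hadd' n m m', fun c m n => hsmul' n c m,
      fun m n n' => congrFun (hadd n n') m, fun c m n => congrFun (hsmul c n) m⟩,
      fun a m n => (congrFun (hbal a n) m).symm⟩
  · rintro ⟨hB, ⟨hadd, hsmul, hadd', hsmul'⟩, hbal⟩
    refine ⟨fun n n' => funext fun m => hadd' m n n', fun c n => funext fun m => hsmul' c m n,
      fun a n => funext fun m => (hbal a m n).symm, fun n m m' => hadd m m' n,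
      fun n c m => hsmul c m n, fun n => ?_, hB⟩
    simpa only [image_singleton, bddMap_iff_famBdd_singleton] using
      hB {n} (isVonNBounded_singleton n)

end BalancedMaps

section BalancedTensor

variable {𝕜 A M N E : Type*} [RCLike 𝕜] [Ring A] [Algebra 𝕜 A]
  [AddCommGroup M] [Module 𝕜 M] [Module Aᵐᵒᵖ M] [AddCommGroup N] [Module 𝕜 N] [Module A N]
  [AddCommGroup E] [Module 𝕜 E]

theorem isBilinMap_comp_tmul (g : M ⊗[𝕜] N →ₗ[𝕜] E) :
    IsBilinMap 𝕜 fun p : M × N => g (p.1 ⊗ₜ p.2) :=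
  ⟨by simp [TensorProduct.add_tmul], by simp [← TensorProduct.smul_tmul'],
    by simp [TensorProduct.tmul_add], by simp⟩

theorem isBalancedMap_comp_tmul_iff (g : M ⊗[𝕜] N →ₗ[𝕜] E) :
    IsBalancedMap A (fun p : M × N => g (p.1 ⊗ₜ p.2)) ↔
      balancedRel 𝕜 A M N ≤ LinearMap.ker g := by
  rw [balancedRel, Submodule.span_le]
  constructor
  · rintro hg _ ⟨a, m, n, rfl⟩
    simpa [sub_eq_zero] using hg a m n
  · intro hg a m n
    simpa [sub_eq_zero] using hg ⟨a, m, n, rfl⟩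

def IsBilinMap.lift {f : M × N → E} (hf : IsBilinMap 𝕜 f) : M ⊗[𝕜] N →ₗ[𝕜] E :=
  TensorProduct.lift (LinearMap.mk₂ 𝕜 (fun m n => f (m, n)) hf.1 hf.2.1 hf.2.2.1 hf.2.2.2)

@[simp]
theorem IsBilinMap.lift_tmul {f : M × N → E} (hf : IsBilinMap 𝕜 f) (m : M) (n : N) :
    hf.lift (m ⊗ₜ n) = f (m, n) := by
  simp [IsBilinMap.lift]

theorem Submodule.linearMap_qext_tmul {J : Submodule 𝕜 (M ⊗[𝕜] N)}
    {g₁ g₂ : (M ⊗[𝕜] N) ⧸ J →ₗ[𝕜] E} (h : ∀ m n, g₁ (J.mkQ (m ⊗ₜ n)) = g₂ (J.mkQ (m ⊗ₜ n))) :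
    g₁ = g₂ :=
  J.linearMap_qext (TensorProduct.ext' h)

end BalancedTensor

section BetaQuotient

variable {𝕜 A M N E : Type*} [RCLike 𝕜] [Ring A] [Algebra 𝕜 A]
  [AddCommGroup M] [Module 𝕜 M] [Module Aᵐᵒᵖ M] [TopologicalSpace M]
  [AddCommGroup N] [Module 𝕜 N] [Module A N] [TopologicalSpace N]
  [AddCommGroup E] [Module 𝕜 E] [TopologicalSpace E]
  {τT : TopologicalSpace (M ⊗[𝕜] N)} {J : Submodule 𝕜 (M ⊗[𝕜] N)}

theorem bddMap_mkQ_comp_tmul (hτT : IsBetaTensorTop 𝕜 inferInstance inferInstance τT) :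
    BddMap 𝕜 inferInstance (τT.coinduced J.mkQ) fun p : M × N => J.mkQ (p.1 ⊗ₜ p.2) :=
  let := τT
  J.mkQL.bddMap.comp hτT.2.1

theorem isBddBalancedBilinMap_comp_mkQ_tmul (hτT : IsBetaTensorTop 𝕜 inferInstance inferInstance τT)
    (hJ : balancedRel 𝕜 A M N ≤ J) {g : (M ⊗[𝕜] N) ⧸ J →ₗ[𝕜] E}
    (hg : BddMap 𝕜 (τT.coinduced J.mkQ) inferInstance g) :
    IsBddBalancedBilinMap 𝕜 A fun p : M × N => g (J.mkQ (p.1 ⊗ₜ p.2)) :=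
  ⟨hg.comp (bddMap_mkQ_comp_tmul hτT), isBilinMap_comp_tmul (g ∘ₗ J.mkQ),
    (isBalancedMap_comp_tmul_iff (g ∘ₗ J.mkQ)).2
      (hJ.trans (J.ker_mkQ.ge.trans (LinearMap.ker_le_ker_comp J.mkQ g)))⟩

variable [ContinuousSMul 𝕜 M] [ContinuousSMul 𝕜 N]

theorem IsBddBalancedBilinMap.existsUnique_quotient_lift [T1Space E]
    (hE : IsLCTop 𝕜 E inferInstance) (hτT : IsBetaTensorTop 𝕜 inferInstance inferInstance τT)
    (hJ : (J : Set (M ⊗[𝕜] N)) = @closure _ τT (balancedRel 𝕜 A M N)) {f : M × N → E}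
    (hf : IsBddBalancedBilinMap 𝕜 A f) :
    ∃! g : (M ⊗[𝕜] N) ⧸ J →ₗ[𝕜] E, BddMap 𝕜 (τT.coinduced J.mkQ) inferInstance g ∧
      ∀ p : M × N, g (J.mkQ (p.1 ⊗ₜ p.2)) = f p := by
  obtain ⟨hfb, hfl, hfA⟩ := hf
  let := τT
  have hcont : Continuous hfl.lift :=
    continuous_of_isBetaTensorTop hE hτT _ (by simpa only [IsBilinMap.lift_tmul] using hfb)
  have hker : J ≤ LinearMap.ker hfl.lift := by
    have hrel := (isBalancedMap_comp_tmul_iff hfl.lift).1 (by simpa using hfA)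
    intro x hx
    rw [← SetLike.mem_coe, hJ] at hx
    exact closure_minimal (fun y hy => LinearMap.mem_ker.1 (hrel hy))
      (isClosed_singleton.preimage hcont) hx
  let g := J.liftQ hfl.lift hker
  have hgc : Continuous g := J.isQuotientMap_mkQ.continuous_iff.2 hcont
  refine ⟨g, ⟨ContinuousLinearMap.bddMap ⟨g, hgc⟩, fun p => hfl.lift_tmul p.1 p.2⟩, ?_⟩
  rintro g' ⟨-, hg'f⟩
  exact Submodule.linearMap_qext_tmul fun m n => (hg'f (m, n)).trans (hfl.lift_tmul m n).symm

theorem bijOn_comp_mkQ_tmul [T1Space E] (hE : IsLCTop 𝕜 E inferInstance)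
    (hτT : IsBetaTensorTop 𝕜 inferInstance inferInstance τT)
    (hJ : (J : Set (M ⊗[𝕜] N)) = @closure _ τT (balancedRel 𝕜 A M N)) :
    BijOn (fun (g : (M ⊗[𝕜] N) ⧸ J →ₗ[𝕜] E) (p : M × N) => g (J.mkQ (p.1 ⊗ₜ p.2)))
      {g | BddMap 𝕜 (τT.coinduced J.mkQ) inferInstance g} {f | IsBddBalancedBilinMap 𝕜 A f} := by
  let := τT
  refine ⟨fun g => isBddBalancedBilinMap_comp_mkQ_tmul hτT (Submodule.le_of_coe_eq_closure hJ),
    fun g₁ _ g₂ _ h => Submodule.linearMap_qext_tmul fun m n => congrFun h (m, n), fun f hf => ?_⟩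
  obtain ⟨g, ⟨hg, hgf⟩, -⟩ := hf.existsUnique_quotient_lift hE hτT hJ
  exact ⟨g, hg, funext hgf⟩

theorem famBdd_quotient_iff_famBdd_comp_mkQ_tmul (hE : IsLCTop 𝕜 E inferInstance)
    (hτT : IsBetaTensorTop 𝕜 inferInstance inferInstance τT)
    (S : Set ((M ⊗[𝕜] N) ⧸ J →ₗ[𝕜] E)) :
    FamBdd 𝕜 (τT.coinduced J.mkQ) inferInstance
        ((fun g : (M ⊗[𝕜] N) ⧸ J →ₗ[𝕜] E => (g : (M ⊗[𝕜] N) ⧸ J → E)) '' S) ↔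
      FamBdd 𝕜 inferInstance inferInstance
        ((fun g (p : M × N) => g (J.mkQ (p.1 ⊗ₜ p.2))) '' S) := by
  constructor
  · intro hS
    have := hS.comp_bddMap (bddMap_mkQ_comp_tmul hτT)
    rwa [image_image] at this
  · intro hS
    rw [image_eq_range] at hS ⊢
    let := τT.coinduced J.mkQ
    exact famBdd_range_of_setOf_forall_mem_nhds (fun g : S => g.1)
      fun W hW => setOf_forall_mem_nhds_quotient_of_isBetaTensorTop hE hτT J _ hS hW

end BetaQuotient

theorem statement7_general {𝕜 : Type*} [RCLike 𝕜]
    -- the bounded algebra A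
    (A : Type*) [Ring A] [Algebra 𝕜 A]
    -- M, a bounded right A-module
    (M : Type*) [AddCommGroup M] [Module 𝕜 M] [Module Aᵐᵒᵖ M]
    [TopologicalSpace M] (hM : IsLCTop 𝕜 M (inferInstance))
    -- N, a bounded left A-module
    (N : Type*) [AddCommGroup N] [Module 𝕜 N] [Module A N]
    [TopologicalSpace N] (hN : IsLCTop 𝕜 N (inferInstance))
    -- E, a locally convex space
    (E : Type*) [AddCommGroup E] [Module 𝕜 E] [TopologicalSpace E] [T2Space E]
    (hE : IsLCTop 𝕜 E (inferInstance))
    -- the bornological tensor product topology on M ⊗[𝕜] N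
    (τT : TopologicalSpace (TensorProduct 𝕜 M N))
    (hτT : IsBetaTensorTop 𝕜 (inferInstance) (inferInstance) τT)
    -- J = closure of J₀ in M ⊗_β N
    (J : Submodule 𝕜 (TensorProduct 𝕜 M N))
    (hJ : (J : Set (TensorProduct 𝕜 M N)) = @closure _ τT (balancedRel 𝕜 A M N)) :
    ∀ τQ : TopologicalSpace (TensorProduct 𝕜 M N ⧸ J), τQ = τT.coinduced J.mkQ →
    -- (i)
    ((∀ g : TensorProduct 𝕜 M N ⧸ J →ₗ[𝕜] E,
        BddMap 𝕜 τQ (inferInstance) ⇑g →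
        (BddMap 𝕜 (inferInstance : TopologicalSpace (M × N)) (inferInstance)
            (fun p : M × N => g (J.mkQ (p.1 ⊗ₜ[𝕜] p.2))) ∧
         IsBilinMap 𝕜 (fun p : M × N => g (J.mkQ (p.1 ⊗ₜ[𝕜] p.2))) ∧
         IsBalancedMap A (fun p : M × N => g (J.mkQ (p.1 ⊗ₜ[𝕜] p.2))))) ∧
    -- (ii)
     (∀ f : M × N → E,
        BddMap 𝕜 (inferInstance : TopologicalSpace (M × N)) (inferInstance) f →
        IsBilinMap 𝕜 f → IsBalancedMap A f →
        ∃! g : TensorProduct 𝕜 M N ⧸ J →ₗ[𝕜] E,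
          BddMap 𝕜 τQ (inferInstance) ⇑g ∧ ∀ p : M × N, g (J.mkQ (p.1 ⊗ₜ[𝕜] p.2)) = f p) ∧
    -- L^b(M ⊗_A^β N, E) ≅ L^{A,b}(M, N; E), bornologically
     (Set.BijOn (fun (g : TensorProduct 𝕜 M N ⧸ J →ₗ[𝕜] E) =>
          (fun p : M × N => g (J.mkQ (p.1 ⊗ₜ[𝕜] p.2))))
        {g | BddMap 𝕜 τQ (inferInstance) ⇑g}
        {f | BddMap 𝕜 (inferInstance : TopologicalSpace (M × N)) (inferInstance) f ∧
             IsBilinMap 𝕜 f ∧ IsBalancedMap A f} ∧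
      ∀ S : Set (TensorProduct 𝕜 M N ⧸ J →ₗ[𝕜] E),
        S ⊆ {g | BddMap 𝕜 τQ (inferInstance) ⇑g} →
        (FamBdd 𝕜 τQ (inferInstance)
            ((fun g : TensorProduct 𝕜 M N ⧸ J →ₗ[𝕜] E => (g : TensorProduct 𝕜 M N ⧸ J → E)) '' S) ↔
         FamBdd 𝕜 (inferInstance : TopologicalSpace (M × N)) (inferInstance)
            ((fun (g : TensorProduct 𝕜 M N ⧸ J →ₗ[𝕜] E) =>
              (fun p : M × N => g (J.mkQ (p.1 ⊗ₜ[𝕜] p.2)))) '' S))) ∧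
    -- L^{A,b}(M, N; E) ≅ L^b_A(M, L^b(N, E)), bornologically
     (Set.BijOn (fun (f : M × N → E) => Function.curry f)
        {f | BddMap 𝕜 (inferInstance : TopologicalSpace (M × N)) (inferInstance) f ∧
             IsBilinMap 𝕜 f ∧ IsBalancedMap A f}
        {h | IsCurriedBddHom 𝕜 A (inferInstance) (inferInstance) (inferInstance) h} ∧
      ∀ S : Set (M × N → E),
        S ⊆ {f | BddMap 𝕜 (inferInstance : TopologicalSpace (M × N)) (inferInstance) f ∧
             IsBilinMap 𝕜 f ∧ IsBalancedMap A f} →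
        (FamBdd 𝕜 (inferInstance : TopologicalSpace (M × N)) (inferInstance) S ↔
         CurFamBdd 𝕜 (inferInstance) (inferInstance) (inferInstance)
           (Function.curry '' S))) ∧
    -- L^{A,b}(M, N; E) ≅ L^b_A(N, L^b(M, E)), bornologically
     (Set.BijOn (fun (f : M × N → E) => (fun n m => f (m, n)))
        {f | BddMap 𝕜 (inferInstance : TopologicalSpace (M × N)) (inferInstance) f ∧
             IsBilinMap 𝕜 f ∧ IsBalancedMap A f}
        {k | IsCurriedBddHom' 𝕜 A (inferInstance) (inferInstance) (inferInstance) k} ∧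
      ∀ S : Set (M × N → E),
        S ⊆ {f | BddMap 𝕜 (inferInstance : TopologicalSpace (M × N)) (inferInstance) f ∧
             IsBilinMap 𝕜 f ∧ IsBalancedMap A f} →
        (FamBdd 𝕜 (inferInstance : TopologicalSpace (M × N)) (inferInstance) S ↔
         CurFamBdd 𝕜 (inferInstance) (inferInstance) (inferInstance)
           ((fun (f : M × N → E) => (fun n m => f (m, n))) '' S)))) := by
  intro τQ hτQ
  subst hτQ
  obtain ⟨⟨_, _⟩, -⟩ := hM
  obtain ⟨⟨_, _⟩, -⟩ := hN
  let := τT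
  exact ⟨fun g => isBddBalancedBilinMap_comp_mkQ_tmul hτT (Submodule.le_of_coe_eq_closure hJ),
    fun f hfb hf hfA => IsBddBalancedBilinMap.existsUnique_quotient_lift hE hτT hJ ⟨hfb, hf, hfA⟩,
    ⟨bijOn_comp_mkQ_tmul hE hτT hJ, fun S _ => famBdd_quotient_iff_famBdd_comp_mkQ_tmul hE hτT S⟩,
    ⟨(Equiv.curry M N E).bijOn isCurriedBddHom_curry_iff, fun S _ => famBdd_iff_curFamBdd_curry S⟩,
    ⟨(((Equiv.prodComm M N).arrowCongr (Equiv.refl E)).trans (Equiv.curry N M E)).bijOn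
      isCurriedBddHom'_flip_iff, fun S _ => famBdd_iff_curFamBdd_flip S⟩⟩

theorem statement7 {𝕜 : Type*} [RCLike 𝕜]
    -- the bounded algebra A
    (A : Type*) [Ring A] [Algebra 𝕜 A] [TopologicalSpace A] [T2Space A]
    (hA : IsLCTop 𝕜 A (inferInstance))
    (hAmul : BddMap 𝕜 (inferInstance : TopologicalSpace (A × A)) (inferInstance)
      (fun p : A × A => p.1 * p.2))
    -- M, a bounded right A-module
    (M : Type*) [AddCommGroup M] [Module 𝕜 M] [Module Aᵐᵒᵖ M] [IsScalarTower 𝕜 Aᵐᵒᵖ M]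
    [TopologicalSpace M] [T2Space M] (hM : IsLCTop 𝕜 M (inferInstance))
    (hMmod : BddMap 𝕜 (inferInstance : TopologicalSpace (A × M)) (inferInstance)
      (fun p : A × M => op p.1 • p.2))
    -- N, a bounded left A-module
    (N : Type*) [AddCommGroup N] [Module 𝕜 N] [Module A N] [IsScalarTower 𝕜 A N]
    [TopologicalSpace N] [T2Space N] (hN : IsLCTop 𝕜 N (inferInstance))
    (hNmod : BddMap 𝕜 (inferInstance : TopologicalSpace (A × N)) (inferInstance)
      (fun p : A × N => p.1 • p.2))
    -- E, a locally convex space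
    (E : Type*) [AddCommGroup E] [Module 𝕜 E] [TopologicalSpace E] [T2Space E]
    (hE : IsLCTop 𝕜 E (inferInstance))
    -- the bornological tensor product topology on M ⊗[𝕜] N
    (τT : TopologicalSpace (TensorProduct 𝕜 M N))
    (hτT : IsBetaTensorTop 𝕜 (inferInstance) (inferInstance) τT)
    -- J = closure of J₀ in M ⊗_β N
    (J : Submodule 𝕜 (TensorProduct 𝕜 M N))
    (hJ : (J : Set (TensorProduct 𝕜 M N)) = @closure _ τT (balancedRel 𝕜 A M N)) :
    ∀ τQ : TopologicalSpace (TensorProduct 𝕜 M N ⧸ J), τQ = τT.coinduced J.mkQ →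
    -- (i)
    ((∀ g : TensorProduct 𝕜 M N ⧸ J →ₗ[𝕜] E,
        BddMap 𝕜 τQ (inferInstance) ⇑g →
        (BddMap 𝕜 (inferInstance : TopologicalSpace (M × N)) (inferInstance)
            (fun p : M × N => g (J.mkQ (p.1 ⊗ₜ[𝕜] p.2))) ∧
         IsBilinMap 𝕜 (fun p : M × N => g (J.mkQ (p.1 ⊗ₜ[𝕜] p.2))) ∧
         IsBalancedMap A (fun p : M × N => g (J.mkQ (p.1 ⊗ₜ[𝕜] p.2))))) ∧
    -- (ii)
     (∀ f : M × N → E,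
        BddMap 𝕜 (inferInstance : TopologicalSpace (M × N)) (inferInstance) f →
        IsBilinMap 𝕜 f → IsBalancedMap A f →
        ∃! g : TensorProduct 𝕜 M N ⧸ J →ₗ[𝕜] E,
          BddMap 𝕜 τQ (inferInstance) ⇑g ∧ ∀ p : M × N, g (J.mkQ (p.1 ⊗ₜ[𝕜] p.2)) = f p) ∧
    -- L^b(M ⊗_A^β N, E) ≅ L^{A,b}(M, N; E), bornologically
     (Set.BijOn (fun (g : TensorProduct 𝕜 M N ⧸ J →ₗ[𝕜] E) =>
          (fun p : M × N => g (J.mkQ (p.1 ⊗ₜ[𝕜] p.2))))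
        {g | BddMap 𝕜 τQ (inferInstance) ⇑g}
        {f | BddMap 𝕜 (inferInstance : TopologicalSpace (M × N)) (inferInstance) f ∧
             IsBilinMap 𝕜 f ∧ IsBalancedMap A f} ∧
      ∀ S : Set (TensorProduct 𝕜 M N ⧸ J →ₗ[𝕜] E),
        S ⊆ {g | BddMap 𝕜 τQ (inferInstance) ⇑g} →
        (FamBdd 𝕜 τQ (inferInstance)
            ((fun g : TensorProduct 𝕜 M N ⧸ J →ₗ[𝕜] E => (g : TensorProduct 𝕜 M N ⧸ J → E)) '' S) ↔
         FamBdd 𝕜 (inferInstance : TopologicalSpace (M × N)) (inferInstance)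
            ((fun (g : TensorProduct 𝕜 M N ⧸ J →ₗ[𝕜] E) =>
              (fun p : M × N => g (J.mkQ (p.1 ⊗ₜ[𝕜] p.2)))) '' S))) ∧
    -- L^{A,b}(M, N; E) ≅ L^b_A(M, L^b(N, E)), bornologically
     (Set.BijOn (fun (f : M × N → E) => Function.curry f)
        {f | BddMap 𝕜 (inferInstance : TopologicalSpace (M × N)) (inferInstance) f ∧
             IsBilinMap 𝕜 f ∧ IsBalancedMap A f}
        {h | IsCurriedBddHom 𝕜 A (inferInstance) (inferInstance) (inferInstance) h} ∧
      ∀ S : Set (M × N → E),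
        S ⊆ {f | BddMap 𝕜 (inferInstance : TopologicalSpace (M × N)) (inferInstance) f ∧
             IsBilinMap 𝕜 f ∧ IsBalancedMap A f} →
        (FamBdd 𝕜 (inferInstance : TopologicalSpace (M × N)) (inferInstance) S ↔
         CurFamBdd 𝕜 (inferInstance) (inferInstance) (inferInstance)
           (Function.curry '' S))) ∧
    -- L^{A,b}(M, N; E) ≅ L^b_A(N, L^b(M, E)), bornologically
     (Set.BijOn (fun (f : M × N → E) => (fun n m => f (m, n)))
        {f | BddMap 𝕜 (inferInstance : TopologicalSpace (M × N)) (inferInstance) f ∧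
             IsBilinMap 𝕜 f ∧ IsBalancedMap A f}
        {k | IsCurriedBddHom' 𝕜 A (inferInstance) (inferInstance) (inferInstance) k} ∧
      ∀ S : Set (M × N → E),
        S ⊆ {f | BddMap 𝕜 (inferInstance : TopologicalSpace (M × N)) (inferInstance) f ∧
             IsBilinMap 𝕜 f ∧ IsBalancedMap A f} →
        (FamBdd 𝕜 (inferInstance : TopologicalSpace (M × N)) (inferInstance) S ↔
         CurFamBdd 𝕜 (inferInstance) (inferInstance) (inferInstance)
           ((fun (f : M × N → E) => (fun n m => f (m, n))) '' S)))) :=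
  statement7_general A M hM N hN E hE τT hτT J hJ
end

section
/- Let A be an algebra over 𝕂 which is both a bounded and a locally convex algebra, and let M be a right and N a left A-module that are both bounded and locally convex A-modules. If M and N are metrizable, then M ⊗_A^π N = M ⊗_A^β N, i.e., the projective and the bornological tensor product topologies on the quotient coincide. -/
/-!
STATEMENT 19: if `M` and `N` are metrizable (bounded and locally convex) modules
over an algebra `A` which is both a bounded and a locally convex algebra, then
`M ⊗_A^π N = M ⊗_A^β N`: the projective and bornological tensor product topologies
coincide (also on the quotients).
-/

open MulOpposite Set
open scoped TensorProduct Pointwise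

/-!
A bilinear map `f` on `M × N` is homogeneous of degree two, `f (c • p) = c ^ 2 • f p`, and its
partial maps `p ↦ f (x, p.2)`, `p ↦ f (p.1, y)` are homogeneous of degree one. For a homogeneous
map of positive degree on a first countable space, continuity at `0` and boundedness are
equivalent: Mathlib's argument for linear maps goes through with `cⁿ` replaced by `cⁿᵏ`. So on
metrizable `M`, `N` the canonical map `M × N → M ⊗ N` is continuous for a linear topology exactly
when it is bounded, the two extremal characterisations single out the same topology, and the
closures of `J₀` and the quotient topologies agree.
-/

open Filter Topology Bornology

section Homogeneous

variable {𝕜 E F : Type*} [NontriviallyNormedField 𝕜]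
  [AddCommGroup E] [Module 𝕜 E] [TopologicalSpace E]
  [AddCommGroup F] [Module 𝕜 F] [TopologicalSpace F]

theorem isVonNBounded_image_of_tendsto_zero_of_homogeneous [ContinuousSMul 𝕜 F]
    {f : E → F} {k : ℕ} (hf : ∀ (c : 𝕜) x, f (c • x) = c ^ k • f x)
    (hf₀ : Tendsto f (𝓝 0) (𝓝 0)) {s : Set E} (hs : IsVonNBounded 𝕜 s) :
    IsVonNBounded 𝕜 (f '' s) := by
  obtain ⟨c, hc0, hc1⟩ := NormedField.exists_norm_lt_one 𝕜
  have hc : c ≠ 0 := norm_pos_iff.mp hc0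
  refine isVonNBounded_of_smul_tendsto_zero (ε := fun n : ℕ => (c ^ n) ^ k) (l := atTop)
    (.of_forall fun n => pow_ne_zero _ (pow_ne_zero _ hc)) fun y hy => ?_
  choose x hxs hxy using hy
  have hcx : Tendsto (fun n => c ^ n • x n) atTop (𝓝 0) :=
    hs.smul_tendsto_zero (.of_forall hxs) (tendsto_pow_atTop_nhds_zero_of_norm_lt_one hc1)
  obtain rfl : y = f ∘ x := funext fun n => (hxy n).symm
  exact (hf₀.comp hcx).congr fun n => by simp [hf]

theorem tendsto_zero_of_isVonNBounded_image_of_homogeneous [IsTopologicalAddGroup E]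
    [ContinuousSMul 𝕜 E] [FirstCountableTopology E]
    {f : E → F} {k : ℕ} (hk : 0 < k) (hf : ∀ (c : 𝕜) x, f (c • x) = c ^ k • f x)
    (hb : ∀ s, IsVonNBounded 𝕜 s → IsVonNBounded 𝕜 (f '' s)) :
    Tendsto f (𝓝 0) (𝓝 0) := by
  obtain ⟨c, hc0, hc1⟩ := NormedField.exists_norm_lt_one 𝕜
  have hc : c ≠ 0 := norm_pos_iff.mp hc0
  rcases (nhds_basis_balanced 𝕜 E).exists_antitone_subbasis with ⟨b, hb_mem, hb_basis⟩
  have hbasis : (𝓝 (0 : E)).HasBasis (fun _ ↦ True) (fun n : ℕ ↦ (c ^ n • b n : Set E)) := by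
    refine hb_basis.1.to_hasBasis' (fun n _ => ⟨n, trivial, ?_⟩) fun n _ => ?_
    · exact (hb_mem n).2 _ (by grw [norm_pow, hc1, one_pow])
    · simpa using smul_mem_nhds_smul₀ (pow_ne_zero n hc) (hb_mem n).1
  simp_rw [hbasis.tendsto_left_iff, true_and, Set.MapsTo]
  by_contra! ⟨V, hV, h⟩
  choose u hu hfu using h
  -- `w n := c⁻ⁿ • u n` tends to zero, so `f ∘ w` has bounded range, and `f (u n) = cⁿᵏ • f (w n)`.
  have hw : Tendsto (fun n : ℕ => (c ^ n)⁻¹ • u n) atTop (𝓝 0) :=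
    hb_basis.tendsto fun n => by
      simpa only [id, Set.mem_smul_set_iff_inv_smul_mem₀ (pow_ne_zero n hc)] using hu n
  have hfw := hb _ (hw.isVonNBounded_range 𝕜)
  have hck : Tendsto (fun n : ℕ => (c ^ n) ^ k) atTop (𝓝 0) := by
    simpa [hk.ne'] using (tendsto_pow_atTop_nhds_zero_of_norm_lt_one hc1).pow k
  have hfu0 : Tendsto (fun n => f (u n)) atTop (𝓝 0) := by
    refine (hfw.smul_tendsto_zero (.of_forall fun n => ⟨_, Set.mem_range_self n, rfl⟩)
      hck).congr fun n => ?_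
    simp [← hf, smul_inv_smul₀ (pow_ne_zero n hc)]
  exact (hfu0.eventually_mem hV).exists.elim fun n hn => hfu n hn

end Homogeneous

theorem bddMap_iff {𝕜 E F : Type*} [RCLike 𝕜] [AddCommGroup E] [Module 𝕜 E]
    [TopologicalSpace E] [AddCommGroup F] [Module 𝕜 F] [TopologicalSpace F] {f : E → F} :
    BddMap 𝕜 inferInstance inferInstance f ↔
      ∀ s, IsVonNBounded 𝕜 s → IsVonNBounded 𝕜 (f '' s) :=
  Iff.rfl

theorem Bornology.IsVonNBounded.prod_s19 {𝕜 M N : Type*} [NormedField 𝕜]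
    [AddCommGroup M] [Module 𝕜 M] [TopologicalSpace M] [ContinuousAdd M]
    [AddCommGroup N] [Module 𝕜 N] [TopologicalSpace N] [ContinuousAdd N]
    {s : Set M} {t : Set N} (hs : IsVonNBounded 𝕜 s) (ht : IsVonNBounded 𝕜 t) :
    IsVonNBounded 𝕜 (s ×ˢ t) :=
  ((hs.image (ContinuousLinearMap.inl 𝕜 M N)).add
      (ht.image (ContinuousLinearMap.inr 𝕜 M N))).subset fun p hp => by
      simpa using Set.add_mem_add (Set.mem_image_of_mem (ContinuousLinearMap.inl 𝕜 M N) hp.1)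
        (Set.mem_image_of_mem (ContinuousLinearMap.inr 𝕜 M N) hp.2)

namespace IsBilinMap

variable {𝕜 M N T : Type*} [RCLike 𝕜] [AddCommGroup M] [Module 𝕜 M]
  [AddCommGroup N] [Module 𝕜 N] [AddCommGroup T] [Module 𝕜 T] {f : M × N → T}

theorem map_smul_sq (hf : IsBilinMap 𝕜 f) (c : 𝕜) (p : M × N) : f (c • p) = c ^ 2 • f p := by
  rw [Prod.smul_def, hf.2.1, hf.2.2.2, smul_smul, sq]

theorem map_zero (hf : IsBilinMap 𝕜 f) : f 0 = 0 := by
  simpa using hf.map_smul_sq 0 0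

theorem map_add_add (hf : IsBilinMap 𝕜 f) (q p : M × N) :
    f (q + p) = f q + f (q.1, p.2) + f (p.1, q.2) + f p := by
  obtain ⟨x, y⟩ := q
  obtain ⟨u, v⟩ := p
  rw [Prod.mk_add_mk, hf.1, hf.2.2.1, hf.2.2.1]
  abel

variable [TopologicalSpace M] [TopologicalSpace N] [TopologicalSpace T]

theorem bddMap_of_continuous [ContinuousSMul 𝕜 T] (hf : IsBilinMap 𝕜 f) (hc : Continuous f) :
    BddMap 𝕜 inferInstance inferInstance f := fun _ hs =>
  isVonNBounded_image_of_tendsto_zero_of_homogeneous hf.map_smul_sq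
    (hf.map_zero ▸ hc.tendsto 0) hs

variable [IsTopologicalAddGroup M] [ContinuousSMul 𝕜 M] [FirstCountableTopology M]
  [IsTopologicalAddGroup N] [ContinuousSMul 𝕜 N] [FirstCountableTopology N]

theorem tendsto_apply_const_fst (hf : IsBilinMap 𝕜 f)
    (hb : BddMap 𝕜 inferInstance inferInstance f) (x : M) :
    Tendsto (fun p : M × N => f (x, p.2)) (𝓝 0) (𝓝 0) := by
  refine tendsto_zero_of_isVonNBounded_image_of_homogeneous (𝕜 := 𝕜) Nat.one_pos
    (fun c p => by rw [pow_one, Prod.smul_snd, hf.2.2.2]) fun s hs => ?_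
  have hxs : IsVonNBounded 𝕜 ((fun p : M × N => (x, p.2)) '' s) :=
    ((isVonNBounded_singleton x).prod_s19 (hs.image (ContinuousLinearMap.snd 𝕜 M N))).subset <| by
      rintro _ ⟨p, hp, rfl⟩
      exact ⟨rfl, p, hp, rfl⟩
  simpa only [Set.image_image] using bddMap_iff.1 hb _ hxs

theorem tendsto_apply_const_snd (hf : IsBilinMap 𝕜 f)
    (hb : BddMap 𝕜 inferInstance inferInstance f) (y : N) :
    Tendsto (fun p : M × N => f (p.1, y)) (𝓝 0) (𝓝 0) := by
  refine tendsto_zero_of_isVonNBounded_image_of_homogeneous (𝕜 := 𝕜) Nat.one_pos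
    (fun c p => by rw [pow_one, Prod.smul_fst, hf.2.1]) fun s hs => ?_
  have hys : IsVonNBounded 𝕜 ((fun p : M × N => (p.1, y)) '' s) :=
    ((hs.image (ContinuousLinearMap.fst 𝕜 M N)).prod_s19 (isVonNBounded_singleton y)).subset <| by
      rintro _ ⟨p, hp, rfl⟩
      exact ⟨⟨p, hp, rfl⟩, rfl⟩
  simpa only [Set.image_image] using bddMap_iff.1 hb _ hys

theorem continuous_of_bddMap [ContinuousAdd T] (hf : IsBilinMap 𝕜 f)
    (hb : BddMap 𝕜 inferInstance inferInstance f) : Continuous f := by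
  refine continuous_iff_continuousAt.2 fun q => ?_
  have hf₀ : Tendsto f (𝓝 0) (𝓝 0) :=
    tendsto_zero_of_isVonNBounded_image_of_homogeneous two_pos hf.map_smul_sq (bddMap_iff.1 hb)
  have hlim := ((tendsto_const_nhds (x := f q)).add (hf.tendsto_apply_const_fst hb q.1)).add
    (hf.tendsto_apply_const_snd hb q.2) |>.add hf₀
  rw [ContinuousAt, ← map_add_left_nhds_zero, tendsto_map'_iff]
  simpa only [add_zero, Function.comp_def, hf.map_add_add] using hlim

end IsBilinMap

theorem isBilinMap_tmul {𝕜 M N : Type*} [RCLike 𝕜] [AddCommGroup M] [Module 𝕜 M]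
    [AddCommGroup N] [Module 𝕜 N] : IsBilinMap 𝕜 (fun p : M × N => p.1 ⊗ₜ[𝕜] p.2) :=
  ⟨TensorProduct.add_tmul, fun c m n => (TensorProduct.smul_tmul' c m n).symm,
    TensorProduct.tmul_add, TensorProduct.tmul_smul⟩

theorem statement19_general {𝕜 : Type*} [RCLike 𝕜]
    (A : Type*) [Ring A] [Algebra 𝕜 A]
    -- M, a metrizable right A-module, both bounded and locally convex
    (M : Type*) [AddCommGroup M] [Module 𝕜 M] [Module Aᵐᵒᵖ M]
    [TopologicalSpace M] [TopologicalSpace.MetrizableSpace M]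
    (hM : IsLCTop 𝕜 M (inferInstance))
    -- N, a metrizable left A-module, both bounded and locally convex
    (N : Type*) [AddCommGroup N] [Module 𝕜 N] [Module A N]
    [TopologicalSpace N] [TopologicalSpace.MetrizableSpace N]
    (hN : IsLCTop 𝕜 N (inferInstance))
    -- the two tensor product topologies and the corresponding closures of J₀
    (τβ τπ : TopologicalSpace (TensorProduct 𝕜 M N))
    (hτβ : IsBetaTensorTop 𝕜 (inferInstance) (inferInstance) τβ)
    (hτπ : IsProjTensorTop 𝕜 (inferInstance) (inferInstance) τπ)
    (Jβ Jπ : Submodule 𝕜 (TensorProduct 𝕜 M N))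
    (hJβ : (Jβ : Set (TensorProduct 𝕜 M N)) = @closure _ τβ (balancedRel 𝕜 A M N))
    (hJπ : (Jπ : Set (TensorProduct 𝕜 M N)) = @closure _ τπ (balancedRel 𝕜 A M N)) :
    τβ = τπ ∧ Jβ = Jπ ∧
      τβ.coinduced Jβ.mkQ = τπ.coinduced Jβ.mkQ := by
  obtain ⟨⟨_, _⟩, -⟩ := hM
  obtain ⟨⟨_, _⟩, -⟩ := hN
  have hβπ : τβ ≤ τπ := by
    let _ := τπ
    have := hτπ.1.1.2
    exact hτβ.2.2 τπ hτπ.1 (isBilinMap_tmul.bddMap_of_continuous hτπ.2.1)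
  have hπβ : τπ ≤ τβ := by
    let _ := τβ
    have := hτβ.1.1.1
    exact hτπ.2.2 τβ hτβ.1 (isBilinMap_tmul.continuous_of_bddMap hτβ.2.1)
  obtain rfl : τβ = τπ := le_antisymm hβπ hπβ
  exact ⟨rfl, SetLike.coe_injective (hJβ.trans hJπ.symm), rfl⟩

theorem statement19 {𝕜 : Type*} [RCLike 𝕜]
    (A : Type*) [Ring A] [Algebra 𝕜 A] [TopologicalSpace A] [T2Space A]
    (hA : IsLCTop 𝕜 A (inferInstance))
    (hAmulc : Continuous fun p : A × A => p.1 * p.2)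
    (hAmulb : BddMap 𝕜 (inferInstance : TopologicalSpace (A × A)) (inferInstance)
      (fun p : A × A => p.1 * p.2))
    -- M, a metrizable right A-module, both bounded and locally convex
    (M : Type*) [AddCommGroup M] [Module 𝕜 M] [Module Aᵐᵒᵖ M] [IsScalarTower 𝕜 Aᵐᵒᵖ M]
    [TopologicalSpace M] [T2Space M] [TopologicalSpace.MetrizableSpace M]
    (hM : IsLCTop 𝕜 M (inferInstance))
    (hMmodc : Continuous fun p : A × M => op p.1 • p.2)
    (hMmodb : BddMap 𝕜 (inferInstance : TopologicalSpace (A × M)) (inferInstance)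
      (fun p : A × M => op p.1 • p.2))
    -- N, a metrizable left A-module, both bounded and locally convex
    (N : Type*) [AddCommGroup N] [Module 𝕜 N] [Module A N] [IsScalarTower 𝕜 A N]
    [TopologicalSpace N] [T2Space N] [TopologicalSpace.MetrizableSpace N]
    (hN : IsLCTop 𝕜 N (inferInstance))
    (hNmodc : Continuous fun p : A × N => p.1 • p.2)
    (hNmodb : BddMap 𝕜 (inferInstance : TopologicalSpace (A × N)) (inferInstance)
      (fun p : A × N => p.1 • p.2))
    -- the two tensor product topologies and the corresponding closures of J₀
    (τβ τπ : TopologicalSpace (TensorProduct 𝕜 M N))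
    (hτβ : IsBetaTensorTop 𝕜 (inferInstance) (inferInstance) τβ)
    (hτπ : IsProjTensorTop 𝕜 (inferInstance) (inferInstance) τπ)
    (Jβ Jπ : Submodule 𝕜 (TensorProduct 𝕜 M N))
    (hJβ : (Jβ : Set (TensorProduct 𝕜 M N)) = @closure _ τβ (balancedRel 𝕜 A M N))
    (hJπ : (Jπ : Set (TensorProduct 𝕜 M N)) = @closure _ τπ (balancedRel 𝕜 A M N)) :
    τβ = τπ ∧ Jβ = Jπ ∧
      τβ.coinduced Jβ.mkQ = τπ.coinduced Jβ.mkQ :=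
  statement19_general A M hM N hN τβ τπ hτβ hτπ Jβ Jπ hJβ hJπ
end
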